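/- Let G : (0,T] → ℝ be continuous nonnegative, and suppose for every τ ∈ (0,T], ∫_τ^T G(t) dt = h(τ) - h(T) where h(τ) = g(τ)·c(τ) for a function c with |c(τ)| ≤ m(τ), m(τ) the infimal volume bound, and g bounded. If there is a sequence τᵢ → 0 with m(τᵢ) uniformly bounded, then ∫₀^T G(t) dt < ∞. Contrapositive: if ∫₀^T G(t) dt = ∞ then m(τ) → ∞ as τ → 0⁺. -/
import Mathlib


theorem stmt15 (T B K : ℝ) (hT : 0 < T)
    (G h g c m : ℝ → ℝ)
    (hGcont : ContinuousOn G (Set.Ioc 0 T))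
    (hGpos : ∀ t ∈ Set.Ioc 0 T, 0 ≤ G t)
    (hint : ∀ τ ∈ Set.Ioc 0 T, ∫ t in τ..T, G t = h τ - h T)
    (hh : ∀ τ ∈ Set.Ioc 0 T, h τ = g τ * c τ)
    (hc : ∀ τ ∈ Set.Ioc 0 T, |c τ| ≤ m τ)
    (hgB : ∀ τ ∈ Set.Ioc 0 T, |g τ| ≤ B)
    (s : ℕ → ℝ) (hs : ∀ n, s n ∈ Set.Ioc 0 T)
    (hs0 : Filter.Tendsto s Filter.atTop (nhds 0))
    (hm : ∀ n, m (s n) ≤ K) :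
    MeasureTheory.IntegrableOn G (Set.Ioc 0 T) := by
  have hB0 : 0 ≤ B := le_trans (abs_nonneg _) (hgB T ⟨hT, le_refl T⟩)
  have hsub : ∀ n, Set.Icc (s n) T ⊆ Set.Ioc 0 T := fun n x hx =>
    ⟨lt_of_lt_of_le (hs n).1 hx.1, hx.2⟩
  have hfi : ∀ n, MeasureTheory.IntegrableOn G (Set.Ioc (s n) T) := fun n =>
    ((hGcont.mono (hsub n)).integrableOn_Icc).mono_set Set.Ioc_subset_Icc_self
  refine MeasureTheory.integrableOn_Ioc_of_intervalIntegral_norm_bounded_left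
    (I := B * K + |h T|) hfi hs0 (Filter.Eventually.of_forall fun n => ?_)
  have hmem : ∀ x ∈ Set.Ioc (s n) T, x ∈ Set.Ioc 0 T := fun x hx =>
    ⟨lt_trans (hs n).1 hx.1, hx.2⟩
  have h1 : (∫ x in Set.Ioc (s n) T, ‖G x‖) = ∫ x in Set.Ioc (s n) T, G x := by
    refine MeasureTheory.setIntegral_congr_fun measurableSet_Ioc fun x hx => ?_
    exact Real.norm_of_nonneg (hGpos x (hmem x hx))
  have h2 : (∫ x in Set.Ioc (s n) T, G x) = ∫ x in (s n)..T, G x := by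
    rw [intervalIntegral.integral_of_le (hs n).2]
  rw [h1, h2, hint (s n) (hs n)]
  have hgc : |h (s n)| ≤ B * K := by
    rw [hh (s n) (hs n), abs_mul]
    calc |g (s n)| * |c (s n)| ≤ B * m (s n) :=
          mul_le_mul (hgB _ (hs n)) (hc _ (hs n)) (abs_nonneg _)
            hB0
      _ ≤ B * K := mul_le_mul_of_nonneg_left (hm n) hB0
  calc h (s n) - h T ≤ |h (s n)| + |h T| := by
        have := abs_sub_abs_le_abs_sub (h (s n)) (h T)
        have := neg_abs_le (h T)
        linarith [le_abs_self (h (s n)), neg_abs_le (h T)]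
    _ ≤ B * K + |h T| := by linarith
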